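/- For non-negative integers l, m, k with 2l ≤ m ≤ 2k, the statistic T(k,m,l) equals C(m,l)·C(2k−m+1, k−m+l) + sum over d' from 0 to l−1 of C(m,d')·[C(2k−m+1, k+1−d') − C(2k−m+1, k−d')]. -/

import Mathlib

/-- Binomial coefficient `C(n,r)` for integer arguments, with the convention
that it is `0` when `r < 0` (and, via `Nat.choose`, when `r > n`). -/
def ibinom (n r : ℤ) : ℕ := if 0 ≤ r then n.toNat.choose r.toNat else 0

/-- `L` (with `true` = rise `(1,1)`, `false` = fall `(1,-1)`) is a Dyck path of
semilength `k`: it has `2k` steps, exactly `k` rises, and every prefix has at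
least as many rises as falls (the path stays weakly above the x-axis). -/
def IsDyck (k : ℕ) (L : List Bool) : Prop :=
  L.length = 2 * k ∧ L.count true = k ∧
  ∀ j : ℕ, (L.take j).count false ≤ (L.take j).count true

/-- `T k m l` is the total number, over all Dyck paths of semilength `k`, of
intervals of `m` consecutive steps containing exactly `l` falls.  An interval is
recorded by the pair (path, starting position). -/
noncomputable def T (k m l : ℕ) : ℕ :=
  Nat.card {p : List Bool × ℕ //
    IsDyck k p.1 ∧ p.2 + m ≤ 2 * k ∧ ((p.1.drop p.2).take m).count false = l}

namespace S12

/-- height (number of rises minus falls) -/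
def ht (L : List Bool) : ℤ := (L.count true : ℤ) - (L.count false : ℤ)

@[simp] lemma ht_nil : ht [] = 0 := by simp [ht]

lemma ht_append (X Y : List Bool) : ht (X ++ Y) = ht X + ht Y := by
  simp [ht, List.count_append]; ring

lemma ht_cons (b : Bool) (L : List Bool) :
    ht (b :: L) = (if b then 1 else -1) + ht L := by
  cases b <;> simp [ht, List.count_cons] <;> ring

lemma length_eq_counts (L : List Bool) :
    (L.length : ℤ) = L.count true + L.count false := by
  induction L with
  | nil => simp
  | cons b t ih => cases b <;> simp [List.count_cons, ih] <;> ring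

lemma two_count_true (L : List Bool) :
    2 * (L.count true : ℤ) = L.length + ht L := by
  have := length_eq_counts L; unfold ht at *; linarith

lemma ht_map_not (L : List Bool) : ht (L.map (fun b => !b)) = - ht L := by
  induction L with
  | nil => simp
  | cons b t ih => cases b <;> simp [ht_cons, ih] <;> ring

lemma ht_reverse (L : List Bool) : ht L.reverse = ht L := by
  simp [ht, List.count_reverse]

lemma ht_take_add_ht_drop (L : List Bool) (j : ℕ) :
    ht (L.take j) + ht (L.drop j) = ht L := by
  rw [← ht_append, List.take_append_drop]

lemma ht_take_nonneg_len (L : List Bool) {j : ℕ} (h : L.length ≤ j) :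
    L.take j = L := List.take_of_length_le h

/-- reverse-complement -/
def rc (L : List Bool) : List Bool := L.reverse.map (fun b => !b)

@[simp] lemma length_rc (L : List Bool) : (rc L).length = L.length := by simp [rc]

@[simp] lemma ht_rc (L : List Bool) : ht (rc L) = - ht L := by
  rw [rc, ht_map_not, ht_reverse]

@[simp] lemma rc_rc (L : List Bool) : rc (rc L) = L := by
  simp [rc, List.map_reverse, Function.comp]
  exact List.map_id'' (fun b => Bool.not_not b) L

lemma rc_append (X Y : List Bool) : rc (X ++ Y) = rc Y ++ rc X := by
  simp [rc]

lemma take_rc (L : List Bool) (j : ℕ) :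
    (rc L).take j = rc (L.drop (L.length - j)) := by
  rw [rc, ← List.map_take, rc]
  congr 1
  have h := List.reverse_take (l := L.reverse) (i := j)
  rw [List.reverse_reverse] at h
  rw [← List.reverse_reverse (List.take j L.reverse), h]
  simp

lemma ht_take_rc (L : List Bool) (j : ℕ) :
    ht ((rc L).take j) = ht (L.take (L.length - j)) - ht L := by
  rw [take_rc, ht_rc]
  have := ht_take_add_ht_drop L (L.length - j)
  linarith

end S12

namespace S12

/-- all prefixes stay at height ≥ -a -/
def POK (a : ℤ) (L : List Bool) : Prop := ∀ j : ℕ, 0 ≤ a + ht (L.take j)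

lemma pok_iff_bdd (a : ℤ) (L : List Bool) :
    POK a L ↔ ∀ j ∈ Finset.range (L.length + 1), 0 ≤ a + ht (L.take j) := by
  constructor
  · intro h j _; exact h j
  · intro h j
    rcases le_or_gt j L.length with hj | hj
    · exact h j (Finset.mem_range.2 (by omega))
    · rw [List.take_of_length_le (by omega)]
      have := h L.length (Finset.mem_range.2 (by omega))
      rwa [List.take_of_length_le (le_refl _)] at this

instance (a : ℤ) (L : List Bool) : Decidable (POK a L) :=
  decidable_of_iff _ (pok_iff_bdd a L).symm

lemma POK.zero_le {a : ℤ} {L : List Bool} (h : POK a L) : 0 ≤ a := by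
  have := h 0; simpa using this

lemma POK.total {a : ℤ} {L : List Bool} (h : POK a L) : 0 ≤ a + ht L := by
  have := h L.length; rwa [List.take_of_length_le (le_refl _)] at this

lemma POK_mono {a a' : ℤ} (hle : a ≤ a') {L : List Bool} (h : POK a L) : POK a' L :=
  fun j => le_trans (h j) (by linarith)

lemma POK_neg {a : ℤ} (ha : a < 0) (L : List Bool) : ¬ POK a L := by
  intro h; have := h.zero_le; omega

lemma POK_append (a : ℤ) (X Y : List Bool) :
    POK a (X ++ Y) ↔ POK a X ∧ POK (a + ht X) Y := by
  constructor
  · intro h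
    constructor
    · intro j
      rcases le_or_gt j X.length with hj | hj
      · have := h j
        rwa [List.take_append, Nat.sub_eq_zero_of_le hj,
          List.take_zero, List.append_nil] at this
      · rw [List.take_of_length_le (by omega)]
        have := h X.length
        rwa [List.take_append, Nat.sub_self, List.take_zero,
          List.append_nil, List.take_of_length_le (le_refl _)] at this
    · intro j
      have := h (X.length + j)
      rw [List.take_append, List.take_of_length_le (by omega),
        Nat.add_sub_cancel_left, ht_append] at this
      linarith
  · rintro ⟨h1, h2⟩ j
    rw [List.take_append, ht_append]
    rcases le_or_gt j X.length with hj | hj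
    · rw [Nat.sub_eq_zero_of_le hj]; simpa using h1 j
    · rw [List.take_of_length_le (by omega)]
      have := h2 (j - X.length)
      linarith

lemma POK_cons (a : ℤ) (b : Bool) (L : List Bool) :
    POK a (b :: L) ↔ 0 ≤ a ∧ POK (a + (if b then 1 else -1)) L := by
  have : (b :: L) = [b] ++ L := rfl
  rw [this, POK_append]
  have h1 : ht [b] = (if b then 1 else -1) := by cases b <;> simp [ht]
  rw [h1]
  constructor
  · rintro ⟨hA, hB⟩; exact ⟨hA.zero_le, hB⟩
  · rintro ⟨hA, hB⟩
    refine ⟨?_, hB⟩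
    intro j
    match j with
    | 0 => simpa using hA
    | (j+1) =>
      rw [List.take_of_length_le (by simp), h1]
      cases b
      · have := hB.zero_le; simp at *; omega
      · simp; omega

/-- POK for reverse-complement -/
lemma POK_rc (b : ℤ) (L : List Bool) :
    POK b (rc L) ↔ ∀ j : ℕ, 0 ≤ b + ht (L.take j) - ht L := by
  constructor
  · intro h j
    rcases le_or_gt j L.length with hj | hj
    · have := h (L.length - j)
      rw [ht_take_rc] at this
      have hjj : L.length - (L.length - j) = j := by omega
      rw [hjj] at this; linarith
    · rw [List.take_of_length_le (by omega)]
      have := h 0; simp at this; linarith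
  · intro h j
    rw [ht_take_rc]
    have := h (L.length - j)
    linarith

/-- the finset of all boolean lists of length n -/
def bools (n : ℕ) : Finset (List Bool) :=
  (Finset.univ : Finset (Fin n → Bool)).image List.ofFn

lemma mem_bools {n : ℕ} {L : List Bool} : L ∈ bools n ↔ L.length = n := by
  constructor
  · intro h
    rcases Finset.mem_image.1 h with ⟨f, _, rfl⟩
    simp
  · intro h
    subst h
    exact Finset.mem_image.2 ⟨L.get, Finset.mem_univ _, List.ofFn_get L⟩

end S12

namespace S12

def gset (i u : ℕ) (a : ℤ) : Finset (List Bool) :=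
  (bools i).filter (fun L => L.count true = u ∧ POK a L)

def g (i u : ℕ) (a : ℤ) : ℕ := (gset i u a).card

lemma mem_gset {i u : ℕ} {a : ℤ} {L : List Bool} :
    L ∈ gset i u a ↔ L.length = i ∧ L.count true = u ∧ POK a L := by
  simp [gset, mem_bools, Finset.mem_filter, and_assoc]

lemma g_neg {i u : ℕ} {a : ℤ} (ha : a < 0) : g i u a = 0 := by
  rw [g, Finset.card_eq_zero]
  ext L
  simp only [mem_gset, Finset.notMem_empty, iff_false]
  rintro ⟨-, -, h⟩
  exact POK_neg ha L h

lemma exists_cons_of_mem_gset {i u : ℕ} {a : ℤ} {L : List Bool}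
    (h : L ∈ gset (i+1) u a) : ∃ b t, L = b :: t := by
  rcases mem_gset.1 h with ⟨hl, -, -⟩
  cases L with
  | nil => simp at hl
  | cons b t => exact ⟨b, t, rfl⟩

lemma card_head_true (i u : ℕ) (a : ℤ) (ha : 0 ≤ a) :
    ((gset (i+1) (u+1) a).filter (fun L => L.headI = true)).card = g i u (a+1) := by
  apply Finset.card_bij' (fun L _ => L.tail) (fun t _ => true :: t)
  · intro L hL
    rcases Finset.mem_filter.1 hL with ⟨hg, hh⟩
    rcases exists_cons_of_mem_gset hg with ⟨b, t, rfl⟩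
    simp only [List.headI] at hh
    subst hh
    rcases mem_gset.1 hg with ⟨hl, hc, hp⟩
    rw [POK_cons] at hp
    refine mem_gset.2 ⟨by simpa using hl, ?_, ?_⟩
    · simp only [List.tail_cons]
      simp [List.count_cons] at hc; omega
    · simpa using hp.2
  · intro t ht
    rcases mem_gset.1 ht with ⟨hl, hc, hp⟩
    refine Finset.mem_filter.2 ⟨mem_gset.2 ⟨by simpa using hl, ?_, ?_⟩, rfl⟩
    · simp [List.count_cons, hc]
    · rw [POK_cons]; exact ⟨ha, by simpa using hp⟩
  · intro L hL
    rcases Finset.mem_filter.1 hL with ⟨hg, hh⟩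
    rcases exists_cons_of_mem_gset hg with ⟨b, t, rfl⟩
    simp only [List.headI] at hh
    subst hh
    rfl
  · intro t _; rfl

lemma card_head_true_zero (i : ℕ) (a : ℤ) :
    ((gset (i+1) 0 a).filter (fun L => L.headI = true)).card = 0 := by
  rw [Finset.card_eq_zero]
  ext L
  simp only [Finset.mem_filter, Finset.notMem_empty, iff_false, not_and]
  intro hg hh
  rcases exists_cons_of_mem_gset hg with ⟨b, t, rfl⟩
  simp only [List.headI] at hh
  subst hh
  rcases mem_gset.1 hg with ⟨-, hc, -⟩
  simp [List.count_cons] at hc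

lemma card_head_false (i u : ℕ) (a : ℤ) (ha : 0 ≤ a) :
    ((gset (i+1) u a).filter (fun L => L.headI = false)).card = g i u (a-1) := by
  apply Finset.card_bij' (fun L _ => L.tail) (fun t _ => false :: t)
  · intro L hL
    rcases Finset.mem_filter.1 hL with ⟨hg, hh⟩
    rcases exists_cons_of_mem_gset hg with ⟨b, t, rfl⟩
    simp only [List.headI] at hh
    subst hh
    rcases mem_gset.1 hg with ⟨hl, hc, hp⟩
    rw [POK_cons] at hp
    refine mem_gset.2 ⟨by simpa using hl, ?_, ?_⟩
    · simp only [List.tail_cons]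
      simpa [List.count_cons] using hc
    · simp only [List.tail_cons]
      have := hp.2; simp at this
      rwa [sub_eq_add_neg]
  · intro t ht
    rcases mem_gset.1 ht with ⟨hl, hc, hp⟩
    refine Finset.mem_filter.2 ⟨mem_gset.2 ⟨by simpa using hl, ?_, ?_⟩, rfl⟩
    · simpa [List.count_cons] using hc
    · rw [POK_cons]
      refine ⟨ha, ?_⟩
      simp only [if_neg (by simp : ¬ (false = true))]
      rwa [sub_eq_add_neg] at hp
  · intro L hL
    rcases Finset.mem_filter.1 hL with ⟨hg, hh⟩
    rcases exists_cons_of_mem_gset hg with ⟨b, t, rfl⟩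
    simp only [List.headI] at hh
    subst hh
    rfl
  · intro t _; rfl

lemma g_succ (i u : ℕ) (a : ℤ) (ha : 0 ≤ a) :
    g (i+1) (u+1) a = g i u (a+1) + g i (u+1) (a-1) := by
  rw [g, ← Finset.card_filter_add_card_filter_not (p := fun L => L.headI = true)]
  congr 1
  · exact card_head_true i u a ha
  · rw [← card_head_false i (u+1) a ha]
    congr 1
    ext L
    simp [Bool.not_eq_true]

lemma g_succ_zero (i : ℕ) (a : ℤ) (ha : 0 ≤ a) :
    g (i+1) 0 a = g i 0 (a-1) := by
  rw [g, ← Finset.card_filter_add_card_filter_not (p := fun L => L.headI = true)]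
  rw [card_head_true_zero, ← card_head_false i 0 a ha]
  simp only [Nat.zero_add]
  congr 1
  ext L
  simp [Bool.not_eq_true]

lemma g_zero_len (u : ℕ) (a : ℤ) (ha : 0 ≤ a) :
    g 0 u a = if u = 0 then 1 else 0 := by
  have : gset 0 u a = if u = 0 then {[]} else ∅ := by
    split_ifs with h
    · subst h
      ext L
      simp only [mem_gset, Finset.mem_singleton]
      constructor
      · rintro ⟨hl, -, -⟩; exact List.length_eq_zero_iff.1 hl
      · rintro rfl
        refine ⟨rfl, rfl, ?_⟩
        intro j; simpa using ha
    · ext L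
      simp only [mem_gset, Finset.notMem_empty, iff_false]
      rintro ⟨hl, hc, -⟩
      rw [List.length_eq_zero_iff.1 hl] at hc
      simp at hc
      omega
  rw [g, this]
  split_ifs <;> simp

/-- ballot-with-floor closed form, additive version -/
lemma g_closed (i : ℕ) : ∀ (u : ℕ) (a : ℤ), 0 ≤ a → (i : ℤ) ≤ 2 * u + a + 1 →
    (g i u a : ℤ) + (i.choose (u + a.toNat + 1) : ℤ) = i.choose u := by
  induction i with
  | zero =>
    intro u a ha _
    rw [g_zero_len u a ha]
    have h1 : Nat.choose 0 (u + a.toNat + 1) = 0 := by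
      rw [Nat.choose_eq_zero_of_lt] ; omega
    rw [h1]
    rcases Nat.eq_zero_or_pos u with rfl | hu
    · simp
    · rw [if_neg (by omega), Nat.choose_eq_zero_of_lt (by omega)]
      simp
  | succ i ih =>
    intro u a ha hle
    have haN : ((a.toNat : ℤ)) = a := Int.toNat_of_nonneg ha
    match u with
    | 0 =>
      rw [g_succ_zero i a ha]
      rcases eq_or_lt_of_le ha with haz | hapos
      · -- a = 0, then i = 0
        have ha0 : a = 0 := haz.symm
        subst ha0
        have hi : i = 0 := by omega
        subst hi
        rw [g_neg (by norm_num)]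
        simp
      · -- a ≥ 1
        have h1 : (0:ℤ) ≤ a - 1 := by omega
        have h2 : (i:ℤ) ≤ 2 * 0 + (a-1) + 1 := by omega
        have IH := ih 0 (a-1) h1 h2
        have hN : (a-1).toNat + 1 = a.toNat := by omega
        rw [Nat.zero_add] at IH
        rw [hN] at IH
        have hPas : (i+1).choose (0 + a.toNat + 1) = i.choose (a.toNat) + i.choose (a.toNat + 1) := by
          simpa [Nat.add_comm] using Nat.choose_succ_succ' (i) (a.toNat)
        have hz : i.choose (a.toNat + 1) = 0 := by
          apply Nat.choose_eq_zero_of_lt; omega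
        rw [Nat.zero_add] at hPas ⊢
        push_cast [hPas, hz]
        push_cast at IH
        simp at IH ⊢
        omega
    | (u+1) =>
      rw [g_succ i u a ha]
      have IH1 := ih u (a+1) (by omega) (by omega)
      have hN1 : u + (a+1).toNat + 1 = u + a.toNat + 2 := by omega
      rw [hN1] at IH1
      have hPas1 : (i+1).choose (u+1) = i.choose u + i.choose (u+1) :=
        Nat.choose_succ_succ' i u
      have hPas2 : (i+1).choose (u + 1 + a.toNat + 1) =
          i.choose (u + a.toNat + 1) + i.choose (u + a.toNat + 2) := by
        have := Nat.choose_succ_succ' i (u + a.toNat + 1)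
        simpa [show u + a.toNat + 1 + 1 = u + 1 + a.toNat + 1 by omega] using this
      rcases eq_or_lt_of_le ha with haz | hapos
      · -- a = 0
        have ha0 : a = 0 := haz.symm
        subst ha0
        have hz : g i (u+1) (0-1 : ℤ) = 0 := g_neg (by norm_num)
        rw [hz]
        have hN0 : (0:ℤ).toNat = 0 := rfl
        push_cast [hPas1, hPas2]
        push_cast at IH1
        simp only [hN0, Nat.add_zero, Nat.zero_add, add_zero, zero_add] at *
        omega
      · -- a ≥ 1
        have IH2 := ih (u+1) (a-1) (by omega) (by omega)
        have hN2 : u + 1 + (a-1).toNat + 1 = u + a.toNat + 1 := by omega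
        rw [hN2] at IH2
        push_cast [hPas1, hPas2]
        push_cast at IH1 IH2
        omega

end S12

namespace S12

lemma ht_take_succ {L : List Bool} {j : ℕ} (h : j < L.length) :
    ht (L.take (j+1)) = ht (L.take j) + (if L[j] then 1 else -1) := by
  rw [List.take_succ, List.getElem?_eq_getElem h]
  cases hb : L[j] <;> simp [ht_append, hb, ht, List.count_cons] <;> ring

lemma ht_take_take (L : List Bool) (j i : ℕ) (hj : j ≤ i) :
    ht ((L.take i).take j) = ht (L.take j) := by
  rw [List.take_take, min_eq_left hj]

lemma ht_take_drop (L : List Bool) (s j : ℕ) :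
    ht ((L.drop s).take j) = ht (L.take (s+j)) - ht (L.take s) := by
  rw [List.take_drop]
  have h1 := ht_take_add_ht_drop (L.take (s+j)) s
  rw [ht_take_take L s (s+j) (by omega)] at h1
  linarith

lemma ht_drop (L : List Bool) (s : ℕ) : ht (L.drop s) = ht L - ht (L.take s) := by
  have := ht_take_add_ht_drop L s; linarith

def pairs (n : ℕ) : Finset (List Bool × List Bool) :=
  (Finset.range (n+1)).biUnion (fun i => bools i ×ˢ bools (n-i))

lemma mem_pairs {n : ℕ} {z : List Bool × List Bool} :
    z ∈ pairs n ↔ z.1.length + z.2.length = n := by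
  simp only [pairs, Finset.mem_biUnion, Finset.mem_range, Finset.mem_product, mem_bools]
  constructor
  · rintro ⟨i, hi, h1, h2⟩; omega
  · intro h; exact ⟨z.1.length, by omega, rfl, by omega⟩

def PairFin (n : ℕ) (a c : ℤ) : Finset (List Bool × List Bool) :=
  (pairs n).filter (fun z =>
    POK 0 z.1 ∧ ht z.1 = a ∧ POK (a+c) z.2 ∧ ht z.2 = -(a+c))

lemma mem_PairFin {n : ℕ} {a c : ℤ} {z : List Bool × List Bool} :
    z ∈ PairFin n a c ↔ z.1.length + z.2.length = n ∧
      POK 0 z.1 ∧ ht z.1 = a ∧ POK (a+c) z.2 ∧ ht z.2 = -(a+c) := by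
  simp [PairFin, Finset.mem_filter, mem_pairs, and_assoc]

def idx (n : ℕ) (a : ℤ) (L : List Bool) : ℕ :=
  Nat.findGreatest (fun j => ht (L.take j) = -a) (n+1)

lemma hL_facts (n u₀ : ℕ) (a : ℕ) (c : ℤ) (hc : 0 ≤ c)
    (hu : (2*u₀ : ℤ) = (n:ℤ) + c + 2) {L : List Bool}
    (hA : L ∈ gset (n+1) u₀ (a:ℤ)) (hB : L ∉ gset (n+1) u₀ ((a:ℤ)-1)) :
    idx n (a:ℤ) L < L.length ∧
    ht (L.take (idx n (a:ℤ) L)) = -(a:ℤ) ∧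
    ht (L.take (idx n (a:ℤ) L + 1)) = -(a:ℤ) + 1 ∧
    (∀ mm, idx n (a:ℤ) L < mm → mm ≤ n+1 → ht (L.take mm) ≠ -(a:ℤ)) ∧
    L.take (idx n (a:ℤ) L) ++ true :: L.drop (idx n (a:ℤ) L + 1) = L ∧
    ht L = c + 1 := by
  rcases mem_gset.1 hA with ⟨hlen, hct, hPOK⟩
  have hnot : ¬ POK ((a:ℤ)-1) L := by
    intro h; exact hB (mem_gset.2 ⟨hlen, hct, h⟩)
  have htL : ht L = c + 1 := by
    have h2 := two_count_true L
    rw [hlen, hct] at h2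
    push_cast at h2; linarith
  have hanonneg : (0:ℤ) ≤ a := by positivity
  set Q : ℕ → Prop := fun j => ht (L.take j) = -(a:ℤ) with hQ
  have hex : ∃ j ≤ n+1, Q j := by
    by_contra hno
    push_neg at hno
    apply hnot
    intro j
    rcases le_or_gt j (n+1) with hj | hj
    · have h1 := hPOK j
      have h2 := hno j hj
      simp only [hQ] at h2
      omega
    · rw [List.take_of_length_le (by omega), htL]
      omega
  rcases hex with ⟨j₀, hj₀le, hj₀⟩
  have hidx : idx n (a:ℤ) L = Nat.findGreatest Q (n+1) := rfl
  have hQi : Q (idx n (a:ℤ) L) := by rw [hidx]; exact Nat.findGreatest_spec hj₀le hj₀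
  have hile : idx n (a:ℤ) L ≤ n + 1 := Nat.findGreatest_le (n+1)
  have hgt : ∀ mm, idx n (a:ℤ) L < mm → mm ≤ n+1 → ¬ Q mm := by
    rw [hidx]; exact fun mm h1 h2 => Nat.findGreatest_is_greatest h1 h2
  have hine : idx n (a:ℤ) L ≠ n + 1 := by
    intro h
    rw [h] at hQi
    simp only [hQ] at hQi
    rw [List.take_of_length_le (by omega), htL] at hQi
    omega
  have hilt : idx n (a:ℤ) L < L.length := by omega
  have hstep : L[idx n (a:ℤ) L] = true := by
    by_contra hb
    have hb' : L[idx n (a:ℤ) L] = false := by simpa using hb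
    have h1 := ht_take_succ hilt
    rw [hb'] at h1
    simp only [hQ] at hQi
    have h2 := hPOK (idx n (a:ℤ) L + 1)
    rw [h1, hQi] at h2
    simp at h2
  have htake1 : ht (L.take (idx n (a:ℤ) L + 1)) = -(a:ℤ) + 1 := by
    rw [ht_take_succ hilt, hstep, hQi]; simp
  refine ⟨hilt, hQi, htake1, hgt, ?_, htL⟩
  rw [← hstep, List.getElem_cons_drop]
  exact List.take_append_drop _ _

lemma pair_card (n u₀ : ℕ) (a : ℕ) (c : ℤ) (hc : 0 ≤ c)
    (hu : (2*u₀ : ℤ) = (n:ℤ) + c + 2) :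
    (PairFin n (a:ℤ) c).card + g (n+1) u₀ ((a:ℤ)-1) = g (n+1) u₀ (a:ℤ) := by
  classical
  have hanonneg : (0:ℤ) ≤ a := by positivity
  have hsub : gset (n+1) u₀ ((a:ℤ)-1) ⊆ gset (n+1) u₀ (a:ℤ) := by
    intro L hL
    rcases mem_gset.1 hL with ⟨h1, h2, h3⟩
    exact mem_gset.2 ⟨h1, h2, POK_mono (by omega) h3⟩
  rw [g, g, ← Finset.card_sdiff_add_card_eq_card hsub]
  congr 1
  apply Finset.card_bij'
    (i := fun z _ => rc z.1 ++ true :: rc z.2)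
    (j := fun L _ => (rc (L.take (idx n (a:ℤ) L)), rc (L.drop (idx n (a:ℤ) L + 1))))
  -- i maps into sdiff
  · rintro ⟨P, S⟩ hz
    rcases mem_PairFin.1 hz with ⟨hlen, hP0, hPa, hS, hSh⟩
    simp only at hlen hP0 hPa hS hSh
    set L' := rc P ++ true :: rc S with hL'
    have hlenL' : L'.length = n + 1 := by simp [hL']; omega
    have htL' : ht L' = c + 1 := by
      rw [hL', ht_append, ht_cons, ht_rc, ht_rc, hPa, hSh]; simp; ring
    have hctL' : L'.count true = u₀ := by
      have h2 := two_count_true L'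
      rw [hlenL', htL'] at h2
      have : (L'.count true : ℤ) = u₀ := by push_cast at h2 ⊢; linarith
      exact_mod_cast this
    have hPOKa : POK (a:ℤ) L' := by
      rw [hL', POK_append]
      constructor
      · rw [POK_rc]
        intro j
        have := hP0 j
        rw [hPa]; linarith
      · rw [ht_rc, hPa]
        have h0 : (a:ℤ) + -(a:ℤ) = 0 := by ring
        rw [h0, POK_cons]
        refine ⟨le_refl 0, ?_⟩
        have h1 : (0:ℤ) + (if (true : Bool) then (1:ℤ) else -1) = 1 := by norm_num
        rw [h1, POK_rc]
        intro j
        have := hS j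
        rw [hSh]
        linarith
    refine Finset.mem_sdiff.2 ⟨mem_gset.2 ⟨hlenL', hctL', hPOKa⟩, ?_⟩
    intro hmem
    have hPOKB := (mem_gset.1 hmem).2.2
    have := hPOKB P.length
    have ht1 : L'.take P.length = rc P := by
      have hh : P.length = (rc P).length := (length_rc P).symm
      rw [hL', hh, List.take_left]
    rw [ht1, ht_rc, hPa] at this
    linarith
  -- j maps into PairFin
  · intro L hL
    rcases Finset.mem_sdiff.1 hL with ⟨hA, hB⟩
    obtain ⟨hilt, hQi, htake1, hgt, hrecomp, htL⟩ := hL_facts n u₀ a c hc hu hA hB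
    rcases mem_gset.1 hA with ⟨hlen, hct, hPOK⟩
    set i := idx n (a:ℤ) L with hi
    have htD : ht (L.drop (i+1)) = (a:ℤ) + c := by
      rw [ht_drop, htL, htake1]; ring
    refine mem_PairFin.2 ⟨?_, ?_, ?_, ?_, ?_⟩
    · simp only [length_rc, List.length_take, List.length_drop, hlen]
      omega
    · simp only
      rw [POK_rc]
      intro j
      rw [List.take_take, hQi]
      have h1 := hPOK (min j i)
      have h2 : L.take (j ⊓ i) = L.take (min j i) := rfl
      rw [h2]
      linarith
    · simp only
      rw [ht_rc, hQi]; ring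
    · simp only
      rw [POK_rc]
      intro j
      rw [htD, ht_take_drop]
      rcases le_or_gt (i+1+j) (n+1) with hj | hj
      · have h1 := hPOK (i+1+j)
        have hne := hgt (i+1+j) (by omega) hj
        rw [htake1]
        have : -(a:ℤ) ≤ ht (L.take (i+1+j)) := by linarith
        have : ht (L.take (i+1+j)) ≠ -(a:ℤ) := hne
        omega
      · rw [List.take_of_length_le (by omega), htL, htake1]
        omega
    · simp only
      rw [ht_rc, htD]
  -- left inverse : j (i z) = z
  · rintro ⟨P, S⟩ hz
    rcases mem_PairFin.1 hz with ⟨hlen, hP0, hPa, hS, hSh⟩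
    simp only at hlen hP0 hPa hS hSh
    set L' := rc P ++ true :: rc S with hL'
    have hQP : ht (L'.take P.length) = -(a:ℤ) := by
      have ht1 : L'.take P.length = rc P := by
        have hh : P.length = (rc P).length := (length_rc P).symm
        rw [hL', hh, List.take_left]
      rw [ht1, ht_rc, hPa]
    have hnogt : ∀ mm, P.length < mm → ht (L'.take mm) ≠ -(a:ℤ) := by
      intro mm hmm
      have hdecomp : L'.take mm = rc P ++ (true :: rc S).take (mm - P.length) := by
        rw [hL', List.take_append,
          List.take_of_length_le (by rw [length_rc]; omega), length_rc]
      have hmm1 : mm - P.length = (mm - P.length - 1) + 1 := by omega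
      set jj := mm - P.length - 1 with hjj
      rw [hdecomp, hmm1, List.take_succ_cons, ht_append, ht_rc, hPa]
      have hcons : ht (true :: (rc S).take jj) = 1 + ht ((rc S).take jj) := by
        rw [ht_cons]; norm_num
      rw [hcons, ht_take_rc, hSh]
      have h1 := hS (S.length - jj)
      intro heq
      linarith
    have hPlen : P.length ≤ n + 1 := by omega
    have hidx : idx n (a:ℤ) L' = P.length := by
      have hge : P.length ≤ idx n (a:ℤ) L' := Nat.le_findGreatest hPlen hQP
      have hle2 : idx n (a:ℤ) L' ≤ P.length := by
        by_contra hlt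
        push_neg at hlt
        have hQi : ht (L'.take (idx n (a:ℤ) L')) = -(a:ℤ) :=
          Nat.findGreatest_spec (P := fun j => ht (L'.take j) = -(a:ℤ)) hPlen hQP
        exact hnogt _ hlt hQi
      omega
    have hdrop : L'.drop (P.length + 1) = rc S := by
      have h1 : L'.drop P.length = true :: rc S := by
        have hh : P.length = (rc P).length := (length_rc P).symm
        rw [hL', hh, List.drop_left]
      have h2 : L'.drop (P.length + 1) = (L'.drop P.length).drop 1 := by
        rw [List.drop_drop]
      rw [h2, h1]
      rfl
    have htak : L'.take P.length = rc P := by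
      have hh : P.length = (rc P).length := (length_rc P).symm
      rw [hL', hh, List.take_left]
    rw [hidx, hdrop, htak, rc_rc, rc_rc]
  -- right inverse : i (j L) = L
  · intro L hL
    rcases Finset.mem_sdiff.1 hL with ⟨hA, hB⟩
    obtain ⟨hilt, hQi, htake1, hgt, hrecomp, htL⟩ := hL_facts n u₀ a c hc hu hA hB
    rw [rc_rc, rc_rc]
    exact hrecomp

end S12

namespace S12

lemma ht_le_length (L : List Bool) : ht L ≤ L.length := by
  have h := two_count_true L
  have h2 : L.count true ≤ L.length := List.count_le_length
  have h3 : (L.count true : ℤ) ≤ L.length := by exact_mod_cast h2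
  linarith

lemma isDyck_iff {k : ℕ} {L : List Bool} :
    IsDyck k L ↔ L.length = 2*k ∧ L.count true = k ∧ POK 0 L := by
  unfold IsDyck
  refine and_congr_right fun _ => and_congr_right fun _ => ?_
  constructor
  · intro h j
    have := h j
    unfold ht
    have hc : ((L.take j).count false : ℤ) ≤ (L.take j).count true := by exact_mod_cast this
    linarith
  · intro h j
    have := h j
    unfold ht at this
    have : ((L.take j).count false : ℤ) ≤ (L.take j).count true := by linarith
    exact_mod_cast this

instance (k : ℕ) (L : List Bool) : Decidable (IsDyck k L) :=
  decidable_of_iff _ isDyck_iff.symm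

def Big (k m l : ℕ) : Finset (List Bool × ℕ) :=
  ((bools (2*k)) ×ˢ Finset.range (2*k - m + 1)).filter
    (fun p => IsDyck k p.1 ∧ p.2 + m ≤ 2*k ∧ ((p.1.drop p.2).take m).count false = l)

lemma T_eq_big (k m l : ℕ) (h2 : m ≤ 2*k) : T k m l = (Big k m l).card := by
  rw [T]
  have hiff : ∀ p : List Bool × ℕ,
      (IsDyck k p.1 ∧ p.2 + m ≤ 2*k ∧ ((p.1.drop p.2).take m).count false = l)
        ↔ p ∈ Big k m l := by
    intro p
    simp only [Big, Finset.mem_filter, Finset.mem_product, mem_bools, Finset.mem_range]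
    constructor
    · rintro ⟨hd, him, hw⟩
      exact ⟨⟨hd.1, by omega⟩, hd, him, hw⟩
    · rintro ⟨-, h⟩; exact h
  rw [Nat.card_congr (Equiv.subtypeEquivRight hiff)]
  exact Nat.card_eq_finsetCard _

def WFin (m l : ℕ) (a : ℤ) : Finset (List Bool) :=
  (bools m).filter (fun W => W.count false = l ∧ POK a W)

lemma WFin_card (m l : ℕ) (hm : l ≤ m) (a : ℤ) :
    (WFin m l a).card = g m (m - l) a := by
  rw [g]
  congr 1
  ext L
  simp only [WFin, gset, Finset.mem_filter, mem_bools]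
  constructor
  · rintro ⟨hl, hc, hp⟩
    refine ⟨hl, ?_, hp⟩
    have := length_eq_counts L
    rw [hl, hc] at this
    have hle : l ≤ m := hm
    omega
  · rintro ⟨hl, hc, hp⟩
    refine ⟨hl, ?_, hp⟩
    have := length_eq_counts L
    rw [hl, hc] at this
    omega

lemma big_card (k m l : ℕ) (h1 : 2*l ≤ m) (h2 : m ≤ 2*k) :
    (Big k m l).card = ∑ a ∈ Finset.range (2*k - m + 1),
      (WFin m l (a:ℤ)).card * (PairFin (2*k-m) (a:ℤ) ((m:ℤ) - 2*l)).card := by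
  classical
  set n := 2*k - m with hn
  rw [Finset.card_eq_sum_card_fiberwise
    (f := fun p : List Bool × ℕ => (ht (p.1.take p.2)).toNat)
    (t := Finset.range (n + 1)) ?_]
  · apply Finset.sum_congr rfl
    intro a _
    rw [← Finset.card_product]
    apply Finset.card_bij'
      (i := fun p _ => ((p.1.drop p.2).take m, (p.1.take p.2, p.1.drop (p.2 + m))))
      (j := fun z _ => (z.2.1 ++ z.1 ++ z.2.2, z.2.1.length))
    · rintro ⟨L, i⟩ hp
      rcases Finset.mem_filter.1 hp with ⟨hbig, -⟩
      rcases Finset.mem_filter.1 hbig with ⟨-, hd, him, -⟩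
      have hlen := (isDyck_iff.1 hd).1
      simp only at him hlen ⊢
      have hil : i ≤ L.length := by omega
      have h3 : (L.drop i).drop m = L.drop (i+m) := by
        rw [List.drop_drop]
      rw [Prod.mk.injEq]
      constructor
      · rw [List.append_assoc, ← h3, List.take_append_drop, List.take_append_drop]
      · rw [List.length_take]
        omega
    · rintro ⟨W, P, S⟩ hz
      rcases Finset.mem_product.1 hz with ⟨hW, hPS⟩
      rcases Finset.mem_filter.1 hW with ⟨hWb, hWc, hWp⟩
      have hWlen := mem_bools.1 hWb
      simp only at hWlen ⊢
      have hLr : P ++ W ++ S = P ++ (W ++ S) := List.append_assoc P W S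
      have hdropP : (P ++ W ++ S).drop P.length = W ++ S := by
        rw [hLr, List.drop_left]
      have htakeP : (P ++ W ++ S).take P.length = P := by
        rw [hLr, List.take_left]
      have hwin : ((P ++ W ++ S).drop P.length).take m = W := by
        rw [hdropP, ← hWlen, List.take_left]
      have hdropS : (P ++ W ++ S).drop (P.length + m) = S := by
        rw [← List.drop_drop, hdropP, ← hWlen, List.drop_left]
      rw [Prod.mk.injEq, Prod.mk.injEq]
      exact ⟨hwin, htakeP, hdropS⟩
    · rintro ⟨L, i⟩ hp
      rcases Finset.mem_filter.1 hp with ⟨hbig, hfib⟩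
      rcases Finset.mem_filter.1 hbig with ⟨-, hd, him, hw⟩
      rcases isDyck_iff.1 hd with ⟨hlen, hct, hPOK⟩
      simp only at him hw hfib hlen hct ⊢
      have hil : i ≤ L.length := by omega
      have hPnn : 0 ≤ ht (L.take i) := by simpa using hPOK i
      have hta : ht (L.take i) = (a:ℤ) := by
        rw [← hfib, Int.toNat_of_nonneg hPnn]
      have hLsplit : L = L.take i ++ L.drop i := (List.take_append_drop i L).symm
      have hPOK2 : POK 0 (L.take i) ∧ POK (0 + ht (L.take i)) (L.drop i) := by
        rw [← POK_append, ← hLsplit]; exact hPOK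
      have hDsplit : L.drop i = (L.drop i).take m ++ (L.drop i).drop m :=
        (List.take_append_drop m (L.drop i)).symm
      have hPOK3 : POK (0 + ht (L.take i)) ((L.drop i).take m) ∧
          POK (0 + ht (L.take i) + ht ((L.drop i).take m)) ((L.drop i).drop m) := by
        rw [← POK_append, ← hDsplit]; exact hPOK2.2
      have hWlen : ((L.drop i).take m).length = m := by
        simp [List.length_take, List.length_drop, hlen]; omega
      have hWct : (((L.drop i).take m).count true : ℤ) = (m:ℤ) - l := by
        have := length_eq_counts ((L.drop i).take m)
        rw [hWlen, hw] at this
        push_cast at this ⊢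
        linarith
      have hWht : ht ((L.drop i).take m) = (m:ℤ) - 2*l := by
        unfold ht
        rw [hWct, hw]
        push_cast
        ring
      have htL : ht L = 0 := by
        have := two_count_true L
        rw [hlen, hct] at this
        push_cast at this
        linarith
      have hSht : ht ((L.drop i).drop m) = -((a:ℤ) + ((m:ℤ) - 2*l)) := by
        have e1 : ht (L.drop i) = ht L - ht (L.take i) := ht_drop L i
        have e2 : ht ((L.drop i).drop m) = ht (L.drop i) - ht ((L.drop i).take m) :=
          ht_drop (L.drop i) m
        rw [e2, e1, htL, hta, hWht]
        ring
      refine Finset.mem_product.2 ⟨?_, ?_⟩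
      · refine Finset.mem_filter.2 ⟨mem_bools.2 hWlen, hw, ?_⟩
        have := hPOK3.1
        rwa [zero_add, hta] at this
      · refine mem_PairFin.2 ⟨?_, hPOK2.1, hta, ?_, ?_⟩
        · simp only [List.length_take, List.length_drop, hlen]
          omega
        · have := hPOK3.2
          rw [zero_add, hta, hWht] at this
          have hdd : L.drop (i + m) = (L.drop i).drop m := by
            rw [List.drop_drop]
          rwa [hdd]
        · have hdd : L.drop (i + m) = (L.drop i).drop m := by
            rw [List.drop_drop]
          rw [hdd, hSht]
    · rintro ⟨W, P, S⟩ hz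
      rcases Finset.mem_product.1 hz with ⟨hW, hPS⟩
      rcases Finset.mem_filter.1 hW with ⟨hWb, hWc, hWp⟩
      have hWlen := mem_bools.1 hWb
      rcases mem_PairFin.1 hPS with ⟨hlens, hP0, hPa, hSp, hSh⟩
      simp only at hWlen hlens hP0 hPa hSp hSh hWc hWp ⊢
      have hWct : (W.count true : ℤ) = (m:ℤ) - l := by
        have := length_eq_counts W
        rw [hWlen, hWc] at this
        push_cast at this ⊢
        linarith
      have hWht : ht W = (m:ℤ) - 2*l := by
        unfold ht
        rw [hWct, hWc]
        push_cast; ring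
      set L := P ++ W ++ S with hL
      have hLr : L = P ++ (W ++ S) := by rw [hL, List.append_assoc]
      have hlenL : L.length = 2*k := by
        simp only [hL, List.length_append]
        omega
      have htL : ht L = 0 := by
        rw [hL, ht_append, ht_append, hPa, hWht, hSh]
        ring
      have hctL : L.count true = k := by
        have := two_count_true L
        rw [hlenL, htL] at this
        push_cast at this
        omega
      have hPOKL : POK 0 L := by
        rw [hLr, POK_append, POK_append]
        refine ⟨hP0, ?_, ?_⟩
        · rwa [zero_add, hPa]
        · rw [zero_add, hPa, hWht]
          exact hSp
      have hdropP : L.drop P.length = W ++ S := by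
        rw [hLr, List.drop_left]
      have htakeP : L.take P.length = P := by
        rw [hLr, List.take_left]
      have hwin : (L.drop P.length).take m = W := by
        rw [hdropP, ← hWlen, List.take_left]
      refine Finset.mem_filter.2 ⟨Finset.mem_filter.2 ⟨?_, ?_, ?_, ?_⟩, ?_⟩
      · refine Finset.mem_product.2 ⟨mem_bools.2 hlenL, Finset.mem_range.2 ?_⟩
        omega
      · exact isDyck_iff.2 ⟨hlenL, hctL, hPOKL⟩
      · simp only
        omega
      · simp only
        rw [hwin, hWc]
      · simp only
        rw [htakeP, hPa]
        simp
  · rintro ⟨L, i⟩ hp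
    rcases Finset.mem_filter.1 hp with ⟨hprod, hd, him, -⟩
    rcases Finset.mem_product.1 hprod with ⟨hLb, hir⟩
    have hlen := mem_bools.1 hLb
    rcases isDyck_iff.1 hd with ⟨-, -, hPOK⟩
    simp only at him hlen ⊢
    have hnn : 0 ≤ ht (L.take i) := by simpa using hPOK i
    have hub : ht (L.take i) ≤ (i:ℤ) := by
      have := ht_le_length (L.take i)
      have h2' : (L.take i).length ≤ i := by
        rw [List.length_take]; omega
      have : ht (L.take i) ≤ ((L.take i).length : ℤ) := this
      have h3' : ((L.take i).length : ℤ) ≤ (i:ℤ) := by exact_mod_cast h2'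
      linarith
    rw [Finset.mem_coe, Finset.mem_range]
    have : i ≤ n := by
      rw [Finset.mem_range] at hir
      omega
    omega

end S12

theorem stmt_12 (k m l : ℕ) (h1 : 2 * l ≤ m) (h2 : m ≤ 2 * k) :
    (T k m l : ℤ) =
      (ibinom m l : ℤ) * ibinom (2 * k - m + 1 : ℤ) ((k : ℤ) - m + l)
        + ∑ d' ∈ Finset.range l,
            (m.choose d' : ℤ) *
              ((ibinom (2 * k - m + 1 : ℤ) ((k : ℤ) + 1 - d') : ℤ)
                - ibinom (2 * k - m + 1 : ℤ) ((k : ℤ) - d')) := by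
  classical
  have hlk : l ≤ k := by omega
  have hlm : l ≤ m := by omega
  set n := 2*k - m with hn
  set u₀ := k - l + 1 with hu0
  set N := n + 1 with hN
  -- Step 1: T as a sum of closed forms
  have hT : (T k m l : ℤ) = ∑ a ∈ Finset.range (n+1),
      ((Nat.choose m (m-l) : ℤ) - Nat.choose m (m-l+a+1)) *
      ((Nat.choose N (u₀+a) : ℤ) - Nat.choose N (u₀+a+1)) := by
    rw [S12.T_eq_big k m l h2, S12.big_card k m l h1 h2]
    push_cast
    apply Finset.sum_congr rfl
    intro a ha
    have hWg := S12.WFin_card m l hlm (a:ℤ)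
    have htoa : ((a:ℤ)).toNat = a := Int.toNat_natCast a
    have hWcl := S12.g_closed m (m-l) (a:ℤ) (by positivity) (by push_cast; omega)
    rw [htoa] at hWcl
    have hWeq : ((S12.WFin m l (a:ℤ)).card : ℤ)
        = (Nat.choose m (m-l) : ℤ) - Nat.choose m (m-l+a+1) := by
      rw [hWg]; linarith [hWcl]
    have hc0 : (0:ℤ) ≤ (m:ℤ) - 2*l := by push_cast; omega
    have hu2 : (2*u₀ : ℤ) = (n:ℤ) + ((m:ℤ) - 2*l) + 2 := by push_cast; omega
    have hPc := S12.pair_card n u₀ a ((m:ℤ) - 2*(l:ℤ)) hc0 hu2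
    have hga := S12.g_closed (n+1) u₀ (a:ℤ) (by positivity) (by push_cast; omega)
    rw [htoa] at hga
    have hPeq : ((S12.PairFin n (a:ℤ) ((m:ℤ) - 2*l)).card : ℤ)
        = (Nat.choose N (u₀+a) : ℤ) - Nat.choose N (u₀+a+1) := by
      rcases Nat.eq_zero_or_pos a with rfl | hapos
      · have harg : ((0:ℕ):ℤ) - 1 = (-1 : ℤ) := by norm_num
        rw [harg, S12.g_neg (by norm_num : (-1:ℤ) < 0)] at hPc
        have hPc2 : (S12.PairFin n ((0:ℕ):ℤ) ((m:ℤ) - 2*l)).card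
            = S12.g (n+1) u₀ ((0:ℕ):ℤ) := by omega
        rw [hPc2, hN]
        linarith [hga]
      · have hga1 := S12.g_closed (n+1) u₀ ((a:ℤ)-1) (by omega)
          (by push_cast; omega)
        have htoa1 : ((a:ℤ)-1).toNat = a - 1 := by omega
        rw [htoa1] at hga1
        have hidx : u₀ + (a-1) + 1 = u₀ + a := by omega
        rw [hidx] at hga1
        have hPcZ : ((S12.PairFin n (a:ℤ) ((m:ℤ) - 2*l)).card : ℤ)
            = (S12.g (n+1) u₀ (a:ℤ) : ℤ) - S12.g (n+1) u₀ ((a:ℤ)-1) := by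
          have h' : ((S12.PairFin n (a:ℤ) ((m:ℤ) - 2*l)).card : ℤ)
              + (S12.g (n+1) u₀ ((a:ℤ)-1) : ℤ) = (S12.g (n+1) u₀ (a:ℤ) : ℤ) := by
            exact_mod_cast congrArg (fun x : ℕ => (x:ℤ)) hPc
          linarith
        rw [hPcZ, hN]
        linarith [hga, hga1]
    rw [hWeq, hPeq]
  -- Step 2: split the sum
  have hsplit : (T k m l : ℤ)
      = (Nat.choose m (m-l) : ℤ) * (∑ a ∈ Finset.range (n+1),
          ((Nat.choose N (u₀+a) : ℤ) - Nat.choose N (u₀+a+1)))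
        - ∑ a ∈ Finset.range (n+1), (Nat.choose m (m-l+a+1) : ℤ) *
          ((Nat.choose N (u₀+a) : ℤ) - Nat.choose N (u₀+a+1)) := by
    rw [hT, Finset.mul_sum, ← Finset.sum_sub_distrib]
    apply Finset.sum_congr rfl
    intro a _
    ring
  -- telescoping
  have htel : ∑ a ∈ Finset.range (n+1),
      ((Nat.choose N (u₀+a) : ℤ) - Nat.choose N (u₀+a+1)) = (Nat.choose N u₀ : ℤ) := by
    have := Finset.sum_range_sub' (fun x => (Nat.choose N (u₀+x) : ℤ)) (n+1)
    simp only [← Nat.add_assoc] at this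
    rw [this]
    have hz : Nat.choose N (u₀ + n + 1) = 0 := by
      apply Nat.choose_eq_zero_of_lt
      omega
    rw [hz]
    simp
  -- restrict the correction sum to range l
  set F : ℕ → ℤ := fun a => (Nat.choose m (m-l+a+1) : ℤ) *
      ((Nat.choose N (u₀+a) : ℤ) - Nat.choose N (u₀+a+1)) with hF
  have hFn : ∀ a, n+1 ≤ a → F a = 0 := by
    intro a ha
    have hz1 : Nat.choose N (u₀+a) = 0 := Nat.choose_eq_zero_of_lt (by omega)
    have hz2 : Nat.choose N (u₀+a+1) = 0 := Nat.choose_eq_zero_of_lt (by omega)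
    simp [hF, hz1, hz2]
  have hFl : ∀ a, l ≤ a → F a = 0 := by
    intro a ha
    have hz : Nat.choose m (m-l+a+1) = 0 := Nat.choose_eq_zero_of_lt (by omega)
    simp [hF, hz]
  have hrange : ∑ a ∈ Finset.range (n+1), F a = ∑ a ∈ Finset.range l, F a := by
    rcases le_total l (n+1) with hle | hle
    · rw [← Finset.sum_subset (Finset.range_subset_range.2 hle)]
      intro x hx hnx
      exact hFl x (by simpa using hnx)
    · rw [Finset.sum_subset (Finset.range_subset_range.2 hle)]
      intro x hx hnx
      exact hFn x (by simpa using hnx)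
  -- reflect
  have hrefl : ∑ a ∈ Finset.range l, F a
      = ∑ d' ∈ Finset.range l, (Nat.choose m (m-d') : ℤ) *
          ((Nat.choose N (k-d') : ℤ) - Nat.choose N (k+1-d')) := by
    rw [← Finset.sum_range_reflect]
    apply Finset.sum_congr rfl
    intro d' hd'
    rw [Finset.mem_range] at hd'
    have e1 : m - l + (l-1-d') + 1 = m - d' := by omega
    have e2 : u₀ + (l-1-d') = k - d' := by omega
    have e3 : u₀ + (l-1-d') + 1 = k+1-d' := by omega
    simp only [hF]
    rw [e1, e3, e2]
  -- main term conversion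
  have hmain : (ibinom m l : ℤ) * ibinom (2 * k - m + 1 : ℤ) ((k : ℤ) - m + l)
      = (Nat.choose m (m-l) : ℤ) * Nat.choose N u₀ := by
    have h1' : (ibinom m l : ℤ) = (Nat.choose m l : ℤ) := by
      unfold ibinom
      rw [if_pos (by positivity : (0:ℤ) ≤ (l:ℤ))]
      simp
    have hsym : Nat.choose m l = Nat.choose m (m-l) := (Nat.choose_symm hlm).symm
    rcases le_or_gt m (k+l) with hml | hml
    · have hnn : (0:ℤ) ≤ (k:ℤ) - m + l := by push_cast; omega
      have h2' : (ibinom (2 * k - m + 1 : ℤ) ((k : ℤ) - m + l) : ℤ)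
          = (Nat.choose N (k+l-m) : ℤ) := by
        unfold ibinom
        rw [if_pos hnn]
        have e1 : ((2 * (k:ℤ) - m + 1)).toNat = N := by omega
        have e2 : ((k:ℤ) - m + l).toNat = k+l-m := by omega
        rw [e1, e2]
      have hsym2 : Nat.choose N (k+l-m) = Nat.choose N u₀ := by
        have : k+l-m = N - u₀ := by omega
        rw [this, Nat.choose_symm (by omega)]
      rw [h1', h2', hsym, hsym2]
    · have hneg : ¬ (0:ℤ) ≤ (k:ℤ) - m + l := by push_cast; omega
      have h2' : (ibinom (2 * k - m + 1 : ℤ) ((k : ℤ) - m + l) : ℤ) = 0 := by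
        unfold ibinom
        rw [if_neg hneg]; norm_num
      have hz : Nat.choose N u₀ = 0 := Nat.choose_eq_zero_of_lt (by omega)
      rw [h2', hz]
      norm_num
  -- correction term conversion
  have hcorr : ∀ d' ∈ Finset.range l,
      (m.choose d' : ℤ) *
        ((ibinom (2 * k - m + 1 : ℤ) ((k : ℤ) + 1 - d') : ℤ)
          - ibinom (2 * k - m + 1 : ℤ) ((k : ℤ) - d'))
      = (Nat.choose m (m-d') : ℤ) *
          ((Nat.choose N (k+1-d') : ℤ) - Nat.choose N (k-d')) := by
    intro d' hd'
    rw [Finset.mem_range] at hd'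
    have hd'k : d' ≤ k := by omega
    have e1 : (ibinom (2 * k - m + 1 : ℤ) ((k : ℤ) + 1 - d') : ℤ)
        = (Nat.choose N (k+1-d') : ℤ) := by
      unfold ibinom
      rw [if_pos (by push_cast; omega : (0:ℤ) ≤ (k:ℤ) + 1 - d')]
      have a1 : ((2 * (k:ℤ) - m + 1)).toNat = N := by omega
      have a2 : ((k:ℤ) + 1 - d').toNat = k+1-d' := by omega
      rw [a1, a2]
    have e2 : (ibinom (2 * k - m + 1 : ℤ) ((k : ℤ) - d') : ℤ)
        = (Nat.choose N (k-d') : ℤ) := by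
      unfold ibinom
      rw [if_pos (by push_cast; omega : (0:ℤ) ≤ (k:ℤ) - d')]
      have a1 : ((2 * (k:ℤ) - m + 1)).toNat = N := by omega
      have a2 : ((k:ℤ) - d').toNat = k-d' := by omega
      rw [a1, a2]
    have e3 : (m.choose d' : ℤ) = (Nat.choose m (m-d') : ℤ) := by
      rw [Nat.choose_symm (by omega)]
    rw [e1, e2, e3]
  rw [Finset.sum_congr rfl hcorr, hmain]
  rw [hsplit, htel, hrange, hrefl]
  rw [sub_eq_add_neg, ← Finset.sum_neg_distrib]
  congr 1
  apply Finset.sum_congr rfl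
  intro d' _
  ring
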